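/- Let $I$ be a strongly stable square-free monomial ideal in $\Bbbk[x_1,\dots,x_n]$ generated in a single degree $d$. Then the lcm-lattice $L_I$ is ranked: whenever $\mathbf{n}$ covers $\mathbf{m}$ in $L_I$ with $\mathbf{m}\neq\hat{0}$, one has $\deg(\mathbf{n})=\deg(\mathbf{m})+1$. -/
import Mathlib

open MvPolynomial

def IsMonomialIdeal {K : Type*} [Field K] {n : ℕ}
    (I : Ideal (MvPolynomial (Fin n) K)) : Prop :=
  ∃ S : Set (Fin n →₀ ℕ), I = Ideal.span ((fun u => monomial u (1 : K)) '' S)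

def IsBorelFixed {K : Type*} [Field K] {n : ℕ}
    (I : Ideal (MvPolynomial (Fin n) K)) : Prop :=
  ∀ u : Fin n →₀ ℕ, monomial u (1 : K) ∈ I →
    ∀ t s : Fin n, s < t → u t ≠ 0 →
      monomial (u - Finsupp.single t 1 + Finsupp.single s 1) (1 : K) ∈ I

noncomputable def borelClosure {K : Type*} [Field K] {n : ℕ}
    (ms : Set (Fin n →₀ ℕ)) : Ideal (MvPolynomial (Fin n) K) :=
  sInf {J | IsMonomialIdeal J ∧ IsBorelFixed J ∧ ∀ u ∈ ms, monomial u (1 : K) ∈ J}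

noncomputable def varsIdeal (K : Type*) [Field K] (n : ℕ) (a b : ℕ) :
    Ideal (MvPolynomial (Fin n) K) :=
  Ideal.span { p | ∃ i : Fin n, a ≤ (i : ℕ) + 1 ∧ (i : ℕ) + 1 ≤ b ∧ p = X i }

lemma finsetSup_apply' {n r : ℕ} (T : Finset (Fin r)) (m : Fin r → (Fin n →₀ ℕ)) (i : Fin n) :
    (T.sup m) i = T.sup (fun k => m k i) := by
  induction T using Finset.cons_induction with
  | empty => rfl
  | cons k T hk ih => simp [Finset.sup_cons, Finsupp.sup_apply, ih]

lemma sum_eq_zero' {n : ℕ} {f : Fin n →₀ ℕ} (h : f.sum (fun _ e => e) = 0) : f = 0 := by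
  ext i
  by_cases hi : f i = 0
  · simp [hi]
  · exact absurd ((Finset.sum_eq_zero_iff.mp h) i (Finsupp.mem_support_iff.mpr hi)) hi

lemma sum_sub_add' {n : ℕ} (f g : Fin n →₀ ℕ) (h : f ≤ g) :
    g.sum (fun _ e => e) = f.sum (fun _ e => e) + (g - f).sum (fun _ e => e) := by
  conv_lhs => rw [← add_tsub_cancel_of_le h]
  rw [Finsupp.sum_add_index' (fun _ => rfl) (fun _ _ _ => rfl)]

lemma eq_of_le_of_sum' {n : ℕ} {f g : Fin n →₀ ℕ} (h : f ≤ g)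
    (hs : f.sum (fun _ e => e) = g.sum (fun _ e => e)) : g = f := by
  have h1 := sum_sub_add' f g h
  have h2 : (g - f) = 0 := sum_eq_zero' (by omega)
  have h3 := add_tsub_cancel_of_le h
  rw [h2, add_zero] at h3
  exact h3.symm

lemma sum_eq_card' {n : ℕ} {f : Fin n →₀ ℕ} (h : ∀ i, f i ≤ 1) :
    f.sum (fun _ e => e) = f.support.card := by
  rw [Finsupp.sum, Finset.card_eq_sum_ones]
  exact Finset.sum_congr rfl fun i hi =>
    le_antisymm (h i) (Nat.one_le_iff_ne_zero.2 (Finsupp.mem_support_iff.1 hi))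

lemma swap_gen {K : Type*} [Field K] {n r d : ℕ} (m : Fin r → (Fin n →₀ ℕ))
    (hdeg : ∀ k, (m k).sum (fun _ e => e) = d)
    (hss : ∀ k : Fin r, ∀ t s : Fin n, s < t → (m k) t ≠ 0 → (m k) s = 0 →
      monomial ((m k) - Finsupp.single t 1 + Finsupp.single s 1) (1 : K)
        ∈ Ideal.span (Set.range fun l => monomial (m l) (1 : K)))
    (k : Fin r) (t s : Fin n) (hst : s < t) (ht : m k t ≠ 0) (hs : m k s = 0) :
    ∃ k', m k' = m k - Finsupp.single t 1 + Finsupp.single s 1 := by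
  have hmem := hss k t s hst ht hs
  rw [show (Set.range fun l => monomial (m l) (1:K)) =
      (fun u => monomial u (1:K)) '' (Set.range m) by rw [← Set.range_comp]; rfl] at hmem
  rw [mem_ideal_span_monomial_image] at hmem
  set w := m k - Finsupp.single t 1 + Finsupp.single s 1 with hwdef
  classical
  have hw : w ∈ (monomial w (1:K)).support := by
    rw [support_monomial, if_neg one_ne_zero]; exact Finset.mem_singleton_self w
  obtain ⟨u', ⟨l, rfl⟩, hle⟩ := hmem w hw
  refine ⟨l, ?_⟩
  have hsle : Finsupp.single t 1 ≤ m k := Finsupp.single_le_iff.mpr (Nat.one_le_iff_ne_zero.2 ht)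
  have h1 := sum_sub_add' (Finsupp.single t 1) (m k) hsle
  have hs1 : (Finsupp.single t (1:ℕ)).sum (fun _ e => e) = 1 := Finsupp.sum_single_index rfl
  have hw2 : w.sum (fun _ e => e) = (m k - Finsupp.single t 1).sum (fun _ e => e) + 1 := by
    rw [hwdef, Finsupp.sum_add_index' (fun _ => rfl) (fun _ _ _ => rfl),
      Finsupp.sum_single_index rfl]
  have hwsum : w.sum (fun _ e => e) = d := by
    rw [hw2]; have := hdeg k; omega
  exact (eq_of_le_of_sum' hle (by rw [hdeg l, hwsum])).symm

theorem stmt13 {K : Type*} [Field K] (n r d : ℕ) (m : Fin r → (Fin n →₀ ℕ))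
    (hdeg : ∀ k, (m k).sum (fun _ e => e) = d)
    (hsf : ∀ k i, m k i ≤ 1)
    (hmin : ∀ k l : Fin r, m k ≤ m l → k = l)
    (hss : ∀ k : Fin r, ∀ t s : Fin n, s < t → (m k) t ≠ 0 → (m k) s = 0 →
      monomial ((m k) - Finsupp.single t 1 + Finsupp.single s 1) (1 : K)
        ∈ Ideal.span (Set.range fun l => monomial (m l) (1 : K))) :
    ∀ u v : Fin n →₀ ℕ,
      (∃ T : Finset (Fin r), T.Nonempty ∧ u = T.sup m) →
      (∃ T : Finset (Fin r), T.Nonempty ∧ v = T.sup m) →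
      u ≤ v → u ≠ v →
      (∀ w : Fin n →₀ ℕ, (∃ T : Finset (Fin r), T.Nonempty ∧ w = T.sup m) →
        u ≤ w → w ≤ v → w = u ∨ w = v) →
      v.sum (fun _ e => e) = u.sum (fun _ e => e) + 1 := by
  intro u v hu hv hle hne hcov
  classical
  obtain ⟨Tu, hTune, huT⟩ := hu
  obtain ⟨Tv, hTvne, hvT⟩ := hv
  have hub : ∀ (T : Finset (Fin r)) (i : Fin n), (T.sup m) i ≤ 1 := fun T i => by
    rw [finsetSup_apply']; exact Finset.sup_le (fun k _ => hsf k i)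
  have hu1 : ∀ i, u i ≤ 1 := fun i => huT ▸ hub Tu i
  obtain ⟨l, hlTv, hlu⟩ : ∃ l ∈ Tv, ¬ m l ≤ u := by
    by_contra h; push_neg at h
    exact hne (le_antisymm hle (hvT ▸ Finset.sup_le h))
  have hml_v : m l ≤ v := hvT ▸ Finset.le_sup hlTv
  have hveq : v = m l ⊔ u := by
    have h1 : (insert l Tu).sup m = m l ⊔ u := by rw [Finset.sup_insert, huT]
    rcases hcov ((insert l Tu).sup m)
        ⟨insert l Tu, ⟨l, Finset.mem_insert_self l Tu⟩, rfl⟩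
        (by rw [h1]; exact le_sup_right) (by rw [h1]; exact sup_le hml_v hle) with h | h
    · exact absurd (le_sup_left.trans (le_of_eq (h1.symm.trans h))) hlu
    · rw [← h, h1]
  have hvi : ∀ i, v i = max (m l i) (u i) := fun i => by
    rw [hveq, Finsupp.sup_apply]
  set D := v - u with hDdef
  have hDadd : u + D = v := add_tsub_cancel_of_le hle
  have hD01 : ∀ i, D i = if u i = 0 then m l i else 0 := by
    intro i
    rw [hDdef, Finsupp.tsub_apply, hvi i]
    have h1 := hu1 i
    have h2 := hsf l i
    by_cases hb : u i = 0
    · simp [hb]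
    · have h3 : u i = 1 := by omega
      rw [if_neg hb, h3, max_eq_right h2]
  suffices hDs : D.sum (fun _ e => e) = 1 by
    rw [sum_sub_add' u v hle, ← hDdef, hDs]
  have hDne : D ≠ 0 := fun h => hne (by rw [← hDadd, h, add_zero])
  obtain ⟨a, ha⟩ : ∃ a, D a ≠ 0 := by
    by_contra h; push_neg at h; exact hDne (Finsupp.ext h)
  have hA : ∀ i, D i ≠ 0 → u i = 0 ∧ m l i = 1 := by
    intro i h
    rw [hD01 i] at h
    by_cases hb : u i = 0
    · rw [if_pos hb] at h
      exact ⟨hb, le_antisymm (hsf l i) (Nat.one_le_iff_ne_zero.2 h)⟩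
    · rw [if_neg hb] at h; exact absurd rfl h
  have huniq : ∀ b, D b ≠ 0 → b = a := by
    intro b hb
    by_contra hba
    obtain ⟨a₀, t, hlt, ⟨hua₀, hmla₀⟩, ⟨hut, hmlt⟩⟩ :
        ∃ a₀ t : Fin n, a₀ < t ∧ (u a₀ = 0 ∧ m l a₀ = 1) ∧ (u t = 0 ∧ m l t = 1) := by
      rcases lt_or_gt_of_ne hba with h | h
      · exact ⟨b, a, h, hA b hb, hA a ha⟩
      · exact ⟨a, b, h, hA a ha, hA b hb⟩
    have contra : ∀ k' : Fin r, ¬ m k' ≤ u → m k' ≤ v → (m k' ⊔ u) ≠ v → False := by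
      intro k' h1 h2 h3
      have h4 : (insert k' Tu).sup m = m k' ⊔ u := by rw [Finset.sup_insert, huT]
      rcases hcov ((insert k' Tu).sup m)
          ⟨insert k' Tu, ⟨k', Finset.mem_insert_self k' Tu⟩, rfl⟩
          (by rw [h4]; exact le_sup_right) (by rw [h4]; exact sup_le h2 hle) with h | h
      · exact h1 (le_sup_left.trans (le_of_eq (h4.symm.trans h)))
      · exact h3 (h4 ▸ h)
    by_cases hcase : ∃ s : Fin n, s < t ∧ u s ≠ 0 ∧ m l s = 0
    · obtain ⟨s, hst, hus, hmls⟩ := hcase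
      obtain ⟨k', hk'⟩ := swap_gen m hdeg hss l t s hst (by rw [hmlt]; exact one_ne_zero) hmls
      have hg : ∀ i, m k' i = m l i - (if t = i then 1 else 0) + (if s = i then 1 else 0) := by
        intro i
        rw [hk', Finsupp.add_apply, Finsupp.tsub_apply, Finsupp.single_apply,
          Finsupp.single_apply]
      have hsa₀ : s ≠ a₀ := fun h => by rw [h, hmla₀] at hmls; exact one_ne_zero hmls
      apply contra k'
      · intro hc
        have h5 := Finsupp.le_def.mp hc a₀
        rw [hg a₀, if_neg (ne_of_gt hlt), if_neg hsa₀, hmla₀, hua₀] at h5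
        omega
      · rw [Finsupp.le_def]
        intro i
        rw [hg i, hvi i]
        by_cases hti : t = i
        · subst hti
          rw [if_pos rfl, if_neg (ne_of_lt hst), hmlt]
          exact le_trans (by omega) (le_max_left _ _)
        · by_cases hsi : s = i
          · subst hsi
            rw [if_neg hti, if_pos rfl, hmls]
            have h5 : 1 ≤ u s := Nat.one_le_iff_ne_zero.2 hus
            exact le_trans (by omega) (le_max_right _ _)
          · rw [if_neg hti, if_neg hsi]
            exact le_trans (by omega) (le_max_left _ _)
      · intro hc
        have h6 : (m k' ⊔ u) t = v t := by rw [hc]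
        rw [Finsupp.sup_apply, hvi t, hg t, if_pos rfl, if_neg (ne_of_lt hst), hmlt, hut] at h6
        simp at h6
    · push_neg at hcase
      obtain ⟨k0, hk0⟩ := hTune
      have hk0u : m k0 ≤ u := huT ▸ Finset.le_sup hk0
      have hsupmk0 : (m k0).support ⊆ u.support := by
        intro i hi
        rw [Finsupp.mem_support_iff] at hi ⊢
        have := Finsupp.le_def.mp hk0u i
        omega
      have hcard_u : d ≤ u.support.card := by
        have h7 : (m k0).support.card = d := by rw [← sum_eq_card' (hsf k0), hdeg k0]
        rw [← h7]; exact Finset.card_le_card hsupmk0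
      have hcard_ml : (m l).support.card = d := by rw [← sum_eq_card' (hsf l), hdeg l]
      have html : t ∈ (m l).support := Finsupp.mem_support_iff.mpr (by rw [hmlt]; exact one_ne_zero)
      have hinter : u.support ∩ (m l).support ⊆ (m l).support.erase t := by
        intro i hi
        rw [Finset.mem_inter] at hi
        refine Finset.mem_erase.mpr ⟨?_, hi.2⟩
        intro h; rw [h] at hi; exact (Finsupp.mem_support_iff.mp hi.1) hut
      obtain ⟨b', hb'⟩ : (u.support \ (m l).support).Nonempty := by
        rw [← Finset.card_pos]
        have h8 := Finset.card_sdiff_add_card_inter u.support (m l).support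
        have h9 : (u.support ∩ (m l).support).card ≤ d - 1 := by
          have h10 := Finset.card_le_card hinter
          rw [Finset.card_erase_of_mem html, hcard_ml] at h10
          exact h10
        have hd1 : 1 ≤ d := by
          rw [← hcard_ml]; exact Finset.card_pos.mpr ⟨t, html⟩
        omega
      rw [Finset.mem_sdiff, Finsupp.mem_support_iff, Finsupp.mem_support_iff, not_not] at hb'
      obtain ⟨hub', hmlb'⟩ := hb'
      have htb' : t < b' :=
        lt_of_le_of_ne (not_lt.mp (fun h => hcase b' h hub' hmlb'))
          (fun h => hub' (h ▸ hut))
      obtain ⟨k, hkTu, hkb'⟩ : ∃ k ∈ Tu, m k b' ≠ 0 := by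
        by_contra h; push_neg at h
        refine hub' ?_
        rw [huT, finsetSup_apply']
        exact Nat.le_zero.mp (Finset.sup_le (fun k hk => le_of_eq (h k hk)))
      have hku : m k ≤ u := huT ▸ Finset.le_sup hkTu
      have hkt : m k t = 0 := Nat.le_zero.mp (hut ▸ Finsupp.le_def.mp hku t)
      obtain ⟨k', hk'⟩ := swap_gen m hdeg hss k b' t htb' hkb' hkt
      have hg : ∀ i, m k' i = m k i - (if b' = i then 1 else 0) + (if t = i then 1 else 0) := by
        intro i
        rw [hk', Finsupp.add_apply, Finsupp.tsub_apply, Finsupp.single_apply,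
          Finsupp.single_apply]
      apply contra k'
      · intro hc
        have h5 := Finsupp.le_def.mp hc t
        rw [hg t, if_neg (ne_of_gt htb'), if_pos rfl, hkt, hut] at h5
        omega
      · rw [Finsupp.le_def]
        intro i
        rw [hg i, hvi i]
        by_cases hbi : b' = i
        · subst hbi
          rw [if_pos rfl, if_neg (ne_of_lt htb')]
          have h5 := Finsupp.le_def.mp hku b'
          exact le_trans (by omega) (le_max_right _ _)
        · by_cases hti : t = i
          · subst hti
            rw [if_neg hbi, if_pos rfl, hkt, hmlt]
            exact le_trans (by omega) (le_max_left _ _)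
          · rw [if_neg hbi, if_neg hti]
            have h5 := Finsupp.le_def.mp hku i
            exact le_trans (by omega) (le_max_right _ _)
      · intro hc
        have h6 : (m k' ⊔ u) a₀ = v a₀ := by rw [hc]
        have hba₀ : b' ≠ a₀ := fun h => hub' (h ▸ hua₀)
        have hka₀ : m k a₀ = 0 := Nat.le_zero.mp (hua₀ ▸ Finsupp.le_def.mp hku a₀)
        rw [Finsupp.sup_apply, hvi a₀, hg a₀, if_neg hba₀, if_neg (ne_of_gt hlt), hka₀,
          hua₀, hmla₀] at h6
        simp at h6
  have hDsingle : D = Finsupp.single a (D a) := by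
    ext i
    by_cases h : i = a
    · subst h; rw [Finsupp.single_apply, if_pos rfl]
    · rw [Finsupp.single_apply, if_neg (fun hh => h hh.symm)]
      by_contra hc
      exact h (huniq i hc)
  have hDa : D a = 1 := by
    obtain ⟨h1, h2⟩ := hA a ha
    rw [hD01 a, if_pos h1, h2]
  rw [hDsingle, hDa, Finsupp.sum_single_index rfl]
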